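/- Let π be a graphical model on n variables satisfying Dobrushin's condition with parameter α < 1, and let f : S^n → ℝ satisfy |f(x)−f(y)| ≤ K·d_H(x,y)^d. Let X ∼ π and let Y_t be the state of HOGWILD!-Gibbs with average contention τ at time t, coupled greedily with the sequential chain started at the same state. If t > (n/(1−α))·log(2‖f‖_∞ n / K) and the d-th Hamming moment bound E[d_H(X_t, Y_t)^d] ≤ C(τ,α,d)·(log n)^d holds, then |E[f(Y_t)] − E[f(X)]| ≤ K·(C(τ,α,d)·(log n)^d + 1). -/
import Mathlib


/-- Corollary 4.2: estimating a Hamming-power-Lipschitz function by HOGWILD!-Gibbs.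
`π` is the target law, `lawX t` the law of the sequential chain at time `t`
(satisfying the Dobrushin mixing bound), and `ρ` a coupling of the sequential
and HOGWILD! chains at time `t` with `d`-th Hamming moment `≤ C (log n)^d`. -/
theorem stmt7 {S : Type*} [Fintype S] [DecidableEq S] (n : ℕ) (hn : 1 ≤ n)
    (α : ℝ) (hα0 : 0 ≤ α) (hα1 : α < 1) (C K Mf : ℝ) (hK : 0 < K) (hMf : 0 < Mf)
    (d : ℕ) (hd : 1 ≤ d)
    (π lawX lawY : (Fin n → S) → ℝ) (ρ : (Fin n → S) × (Fin n → S) → ℝ)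
    (hπ0 : ∀ x, 0 ≤ π x) (hπ1 : ∑ x, π x = 1)
    (hρ0 : ∀ z, 0 ≤ ρ z)
    (hmarg1 : ∀ x, ∑ y, ρ (x, y) = lawX x)
    (hmarg2 : ∀ y, ∑ x, ρ (x, y) = lawY y)
    (f : (Fin n → S) → ℝ)
    (hLip : ∀ x y, |f x - f y| ≤ K * (hammingDist x y : ℝ) ^ d)
    (hfB : ∀ x, |f x| ≤ Mf)
    (t : ℕ)
    (hTV : (1 / 2) * ∑ x, |lawX x - π x| ≤ (n : ℝ) * Real.exp (-(1 - α) * t / n))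
    (hHam : ∑ z : (Fin n → S) × (Fin n → S), ρ z * (hammingDist z.1 z.2 : ℝ) ^ d ≤
      C * (Real.log n) ^ d)
    (ht : (n : ℝ) / (1 - α) * Real.log (2 * Mf * n / K) < t) :
    |(∑ y, lawY y * f y) - ∑ x, π x * f x| ≤ K * (C * (Real.log n) ^ d + 1) := by

  have hn0 : (0:ℝ) < n := by exact_mod_cast hn
  have h1α : (0:ℝ) < 1 - α := by linarith
  -- reindex sums over the coupling
  have hY : ∑ y, lawY y * f y = ∑ z : (Fin n → S) × (Fin n → S), ρ z * f z.2 := by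
    calc ∑ y, lawY y * f y = ∑ y, ∑ x, ρ (x, y) * f y := by
          simp_rw [← hmarg2, Finset.sum_mul]
      _ = ∑ x, ∑ y, ρ (x, y) * f y := Finset.sum_comm
      _ = ∑ z : (Fin n → S) × (Fin n → S), ρ z * f z.2 := by
          rw [Fintype.sum_prod_type]
  have hX : ∑ x, lawX x * f x = ∑ z : (Fin n → S) × (Fin n → S), ρ z * f z.1 := by
    calc ∑ x, lawX x * f x = ∑ x, ∑ y, ρ (x, y) * f x := by
          simp_rw [← hmarg1, Finset.sum_mul]
      _ = ∑ z : (Fin n → S) × (Fin n → S), ρ z * f z.1 := by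
          rw [Fintype.sum_prod_type]
  have h1 : |(∑ y, lawY y * f y) - ∑ x, lawX x * f x| ≤ K * (C * (Real.log n) ^ d) := by
    rw [hY, hX, ← Finset.sum_sub_distrib]
    refine (Finset.abs_sum_le_sum_abs _ _).trans ?_
    have hstep : ∀ z : (Fin n → S) × (Fin n → S),
        |ρ z * f z.2 - ρ z * f z.1| ≤ K * (ρ z * (hammingDist z.1 z.2 : ℝ) ^ d) := by
      intro z
      rw [← mul_sub, abs_mul, abs_of_nonneg (hρ0 z)]
      have h := hLip z.2 z.1
      rw [hammingDist_comm] at h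
      calc ρ z * |f z.2 - f z.1| ≤ ρ z * (K * (hammingDist z.1 z.2 : ℝ) ^ d) :=
            mul_le_mul_of_nonneg_left h (hρ0 z)
        _ = K * (ρ z * (hammingDist z.1 z.2 : ℝ) ^ d) := by ring
    calc ∑ z : (Fin n → S) × (Fin n → S), |ρ z * f z.2 - ρ z * f z.1|
        ≤ ∑ z : (Fin n → S) × (Fin n → S), K * (ρ z * (hammingDist z.1 z.2 : ℝ) ^ d) :=
          Finset.sum_le_sum fun z _ => hstep z
      _ = K * ∑ z : (Fin n → S) × (Fin n → S), ρ z * (hammingDist z.1 z.2 : ℝ) ^ d := by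
          rw [Finset.mul_sum]
      _ ≤ K * (C * (Real.log n) ^ d) := mul_le_mul_of_nonneg_left hHam hK.le
  -- mixing part
  have hA : (0:ℝ) < 2 * Mf * n / K := by positivity
  have hexp : Real.exp (-(1 - α) * t / n) < K / (2 * Mf * n) := by
    have hlog : Real.log (2 * Mf * n / K) < (1 - α) * t / n := by
      rw [div_mul_eq_mul_div, div_lt_iff₀ h1α] at ht
      rw [lt_div_iff₀ hn0]
      nlinarith
    have key : Real.exp (-Real.log (2 * Mf * n / K)) = K / (2 * Mf * n) := by
      rw [Real.exp_neg, Real.exp_log hA, inv_div]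
    calc Real.exp (-(1 - α) * t / n) = Real.exp (-((1 - α) * t / n)) := by ring_nf
      _ < Real.exp (-Real.log (2 * Mf * n / K)) :=
          Real.exp_lt_exp.mpr (neg_lt_neg hlog)
      _ = K / (2 * Mf * n) := key
  have h2 : |(∑ x, lawX x * f x) - ∑ x, π x * f x| ≤ K := by
    rw [← Finset.sum_sub_distrib]
    refine (Finset.abs_sum_le_sum_abs _ _).trans ?_
    have hstep : ∀ x, |lawX x * f x - π x * f x| ≤ |lawX x - π x| * Mf := by
      intro x
      rw [← sub_mul, abs_mul]
      exact mul_le_mul_of_nonneg_left (hfB x) (abs_nonneg _)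
    calc ∑ x, |lawX x * f x - π x * f x| ≤ ∑ x, |lawX x - π x| * Mf :=
          Finset.sum_le_sum fun x _ => hstep x
      _ = (∑ x, |lawX x - π x|) * Mf := by rw [Finset.sum_mul]
      _ ≤ (2 * ((n : ℝ) * Real.exp (-(1 - α) * t / n))) * Mf := by
          have : ∑ x, |lawX x - π x| ≤ 2 * ((n : ℝ) * Real.exp (-(1 - α) * t / n)) := by
            linarith
          exact mul_le_mul_of_nonneg_right this hMf.le
      _ ≤ K := by
          have h1 : (n : ℝ) * Real.exp (-(1 - α) * t / n) ≤ (n:ℝ) * (K / (2 * Mf * n)) :=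
            mul_le_mul_of_nonneg_left hexp.le hn0.le
          have h2 : (n:ℝ) * (K / (2 * Mf * n)) = K / (2 * Mf) := by
            field_simp
          have h3 : (n:ℝ) * Real.exp (-(1 - α) * t / n) * (2 * Mf) ≤ K / (2 * Mf) * (2 * Mf) :=
            mul_le_mul_of_nonneg_right (h1.trans_eq h2) (by positivity)
          have h4 : K / (2 * Mf) * (2 * Mf) = K := by field_simp
          linarith
  calc |(∑ y, lawY y * f y) - ∑ x, π x * f x|
      ≤ |(∑ y, lawY y * f y) - ∑ x, lawX x * f x|
        + |(∑ x, lawX x * f x) - ∑ x, π x * f x| := abs_sub_le _ _ _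
    _ ≤ K * (C * (Real.log n) ^ d) + K := add_le_add h1 h2
    _ = K * (C * (Real.log n) ^ d + 1) := by ring
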